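/- Finiteness of the discrepancy-principle stopping index: if m lies in the range of L, 0 < ω, ω·‖L‖² ≤ 1, τ > 1, δ > 0, and mᵟ ∈ H₂ satisfies ‖m − mᵟ‖ ≤ δ, then there exists k ∈ ℕ such that the Landweber iterate for the perturbed data satisfies ‖mᵟ − L f_k(mᵟ)‖ ≤ τ·δ. -/

import Mathlib

/-!
For `ω ‖L‖² ≤ 1` one gradient step `x ↦ x - ω L*L x` for `½‖L x‖²` lowers `‖x‖²` by at least
`ω ‖L x‖²`. Both the residual for pure noise (a step for `L*` in place of `L`) and the error for
exact data `L f` evolve by such steps. Hence the noise part of the residual never grows, while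
`ω ∑ₖ ‖L eₖ‖² ≤ ‖f‖²` forces the exact-data residual `L eₖ` to zero; once it is below `(τ - 1) δ`,
the perturbed residual is at most `δ + (τ - 1) δ`.
-/

open ContinuousLinearMap Filter

variable {H₁ H₂ : Type*}
  [NormedAddCommGroup H₁] [InnerProductSpace ℝ H₁] [CompleteSpace H₁]
  [NormedAddCommGroup H₂] [InnerProductSpace ℝ H₂] [CompleteSpace H₂]

/-- The Landweber iteration with data `g` and step size `ω`:
`f₀ = 0`, `f_{k+1} = f_k - ω • L*(L f_k - g)`. -/
noncomputable def landweber (L : H₁ →L[ℝ] H₂) (ω : ℝ) (g : H₂) : ℕ → H₁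
  | 0 => 0
  | k + 1 =>
      landweber L ω g k - ω • (ContinuousLinearMap.adjoint L) (L (landweber L ω g k) - g)

open scoped InnerProduct Topology

section GradientStep

variable {E F : Type*}
  [NormedAddCommGroup E] [InnerProductSpace ℝ E] [CompleteSpace E]
  [NormedAddCommGroup F] [InnerProductSpace ℝ F] [CompleteSpace F]
  {A : E →L[ℝ] F} {ω : ℝ}

theorem norm_sub_smul_adjoint_apply_sq_le (hω : 0 ≤ ω) (hωA : ω * ‖A‖ ^ 2 ≤ 1) (x : E) :
    ‖x - ω • (A†) (A x)‖ ^ 2 ≤ ‖x‖ ^ 2 - ω * ‖A x‖ ^ 2 := by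
  have hinner : inner ℝ x ((A†) (A x)) = ‖A x‖ ^ 2 := by
    rw [adjoint_inner_right, real_inner_self_eq_norm_sq]
  have hnorm : ‖(A†) (A x)‖ ≤ ‖A‖ * ‖A x‖ := by
    simpa only [LinearIsometryEquiv.norm_map] using (A†).le_opNorm (A x)
  have hsq : ω * ‖(A†) (A x)‖ ^ 2 ≤ ‖A x‖ ^ 2 :=
    calc ω * ‖(A†) (A x)‖ ^ 2 ≤ ω * (‖A‖ * ‖A x‖) ^ 2 := by gcongr
      _ = ω * ‖A‖ ^ 2 * ‖A x‖ ^ 2 := by ring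
      _ ≤ ‖A x‖ ^ 2 := mul_le_of_le_one_left (sq_nonneg _) hωA
  rw [norm_sub_sq_real, real_inner_smul_right, norm_smul, mul_pow, Real.norm_eq_abs, sq_abs,
    hinner]
  linarith [mul_le_mul_of_nonneg_left hsq hω]

theorem norm_sub_smul_apply_adjoint_le (hω : 0 ≤ ω) (hωA : ω * ‖A‖ ^ 2 ≤ 1) (y : F) :
    ‖y - ω • A ((A†) y)‖ ≤ ‖y‖ := by
  have h := norm_sub_smul_adjoint_apply_sq_le (A := A†) hω
    (by rwa [LinearIsometryEquiv.norm_map]) y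
  rw [adjoint_adjoint] at h
  exact pow_le_pow_iff_left₀ (norm_nonneg _) (norm_nonneg _) two_ne_zero |>.mp
    (h.trans (sub_le_self _ (by positivity)))

end GradientStep

theorem summable_of_le_sub_succ {a c : ℕ → ℝ} (ha : ∀ k, 0 ≤ a k) (hc : ∀ k, 0 ≤ c k)
    (h : ∀ k, c k ≤ a k - a (k + 1)) : Summable c :=
  summable_of_sum_range_le hc fun n =>
    calc ∑ k ∈ Finset.range n, c k ≤ ∑ k ∈ Finset.range n, (a k - a (k + 1)) :=
          Finset.sum_le_sum fun k _ => h k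
      _ = a 0 - a n := Finset.sum_range_sub' a n
      _ ≤ a 0 := sub_le_self _ (ha n)

section Landweber

variable (L : H₁ →L[ℝ] H₂) (ω : ℝ)

theorem landweber_add (g₁ g₂ : H₂) (k : ℕ) :
    landweber L ω (g₁ + g₂) k = landweber L ω g₁ k + landweber L ω g₂ k := by
  induction k with
  | zero => simp [landweber]
  | succ k ih =>
    simp only [landweber, ih, map_add, smul_add, map_sub, smul_sub]
    abel

theorem landweber_residual_succ (g : H₂) (k : ℕ) :
    g - L (landweber L ω g (k + 1)) =
      (g - L (landweber L ω g k)) - ω • L ((L†) (g - L (landweber L ω g k))) := by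
  simp only [landweber, map_sub, map_smul, smul_sub]
  abel

theorem landweber_error_succ (f : H₁) (k : ℕ) :
    f - landweber L ω (L f) (k + 1) =
      (f - landweber L ω (L f) k) - ω • (L†) (L (f - landweber L ω (L f) k)) := by
  simp only [landweber, map_sub, smul_sub]
  abel

variable {L ω}

theorem norm_landweber_residual_le (hω : 0 ≤ ω) (hωL : ω * ‖L‖ ^ 2 ≤ 1) (g : H₂) (k : ℕ) :
    ‖g - L (landweber L ω g k)‖ ≤ ‖g‖ := by
  induction k with
  | zero => simp [landweber]
  | succ k ih =>
    rw [landweber_residual_succ]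
    exact (norm_sub_smul_apply_adjoint_le hω hωL _).trans ih

theorem tendsto_landweber_residual_of_exact (hω : 0 < ω) (hωL : ω * ‖L‖ ^ 2 ≤ 1) (f : H₁) :
    Tendsto (fun k => ‖L f - L (landweber L ω (L f) k)‖) atTop (𝓝 0) := by
  set e : ℕ → H₁ := fun k => f - landweber L ω (L f) k
  have hsum : Summable fun k => ω * ‖L (e k)‖ ^ 2 :=
    summable_of_le_sub_succ (a := fun k => ‖e k‖ ^ 2) (fun _ => by positivity)
      (fun _ => by positivity) fun k => by
        have h := norm_sub_smul_adjoint_apply_sq_le hω.le hωL (e k)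
        rw [← landweber_error_succ] at h
        linarith
  have h := (hsum.tendsto_atTop_zero.div_const ω).sqrt
  simp only [mul_div_cancel_left₀ _ hω.ne', Real.sqrt_sq (norm_nonneg _), zero_div,
    Real.sqrt_zero] at h
  simpa only [e, map_sub] using h

end Landweber

theorem stmt_14 (L : H₁ →L[ℝ] H₂) (m : H₂) (hm : m ∈ LinearMap.range (L : H₁ →ₗ[ℝ] H₂))
    (ω : ℝ) (hω : 0 < ω) (hωL : ω * ‖L‖ ^ 2 ≤ 1)
    (τ δ : ℝ) (hτ : 1 < τ) (hδ : 0 < δ)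
    (mδ : H₂) (hmδ : ‖m - mδ‖ ≤ δ) :
    ∃ k : ℕ, ‖mδ - L (landweber L ω mδ k)‖ ≤ τ * δ := by
  obtain ⟨f, rfl⟩ := hm
  obtain ⟨k, hk⟩ := ((tendsto_landweber_residual_of_exact hω hωL f).eventually
    (ge_mem_nhds (mul_pos (sub_pos.mpr hτ) hδ))).exists
  refine ⟨k, ?_⟩
  have hsplit : mδ - L (landweber L ω mδ k) =
      (mδ - L f - L (landweber L ω (mδ - L f) k)) + (L f - L (landweber L ω (L f) k)) := by
    conv_lhs => rw [← sub_add_cancel mδ (L f), landweber_add, map_add]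
    abel
  calc ‖mδ - L (landweber L ω mδ k)‖ ≤ ‖mδ - L f‖ + (τ - 1) * δ := by
        rw [hsplit]
        exact norm_add_le_of_le (norm_landweber_residual_le hω.le hωL _ k) hk
    _ ≤ δ + (τ - 1) * δ := by
        gcongr
        rw [norm_sub_rev]
        exact hmδ
    _ = τ * δ := by ring
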